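/- arXiv:0811.1658 — 3 statements merged into one kernel-verified Lean document; each statement's English description precedes it below -/
import Mathlib

section
/- For general Hessian metric data, the curvature R^∇_{IJ} := ∂_I Γ^∇_J − ∂_J Γ^∇_I + Γ^∇_I Γ^∇_J − Γ^∇_J Γ^∇_I of the connection ∇^N with Christoffel symbols Γ^∇_i := blockdiag(0, 2Ŝ_i), Γ^∇_{i'} := [[0,0],[2Ŝ_i,0]] is given by: R^∇_{ij} = 0, R^∇_{i'j'} = 0, and R^∇_{ij'} = [[0,0],[P_{ij},0]], where P_{ij}(x) := g(x)⁻¹ ∂_i ∂_j g(x) (the coordinate expression of g⁻¹∘∇S). Moreover the Ricci curvature of ∇^N satisfies ric^∇(e_i, e_j) = −tr P_{ij} and vanishes on all pairs involving a vertical vector. -/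
open Matrix

noncomputable section

/-- Partial derivative of a function on `ℝⁿ` in the `i`-th coordinate direction. -/
def pd {n : ℕ} (i : Fin n) (f : (Fin n → ℝ) → ℝ) (x : Fin n → ℝ) : ℝ :=
  fderiv ℝ f x (Pi.single i 1)

/-- Entrywise partial derivative of a matrix-valued map on `ℝⁿ`. -/
def mpd {n : ℕ} (i : Fin n) (F : (Fin n → ℝ) → Matrix (Fin n) (Fin n) ℝ)
    (x : Fin n → ℝ) : Matrix (Fin n) (Fin n) ℝ :=
  Matrix.of fun a b => pd i (fun y => F y a b) x

/-- Hessian metric data on a set `U ⊆ ℝⁿ`: a smooth symmetric invertible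
matrix-valued map whose cubic form `S_{ijk} = ∂_k g_{ij}` is totally symmetric. -/
structure HessianData (n : ℕ) (U : Set (Fin n → ℝ))
    (g : (Fin n → ℝ) → Matrix (Fin n) (Fin n) ℝ) : Prop where
  isOpen : IsOpen U
  smooth : ∀ i j, ContDiffOn ℝ (⊤ : ℕ∞) (fun x => g x i j) U
  symm : ∀ x ∈ U, (g x).IsSymm
  invertible : ∀ x ∈ U, IsUnit (g x).det
  cubic_symm : ∀ x ∈ U, ∀ i j k : Fin n,
    pd k (fun y => g y i j) x = pd j (fun y => g y i k) x

/-- `Ŝᵢ(x) = ½ g(x)⁻¹ ∂ᵢ g(x)`. -/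
def Shat {n : ℕ} (g : (Fin n → ℝ) → Matrix (Fin n) (Fin n) ℝ)
    (i : Fin n) (x : Fin n → ℝ) : Matrix (Fin n) (Fin n) ℝ :=
  (2⁻¹ : ℝ) • ((g x)⁻¹ * mpd i g x)

/-- The `I`-th standard basis vector of `ℝ^{2n} = ℝⁿ × ℝⁿ`, indexed by `Fin n ⊕ Fin n`
(horizontal indices `inl i`, vertical indices `inr i'`). -/
def eN {n : ℕ} : Fin n ⊕ Fin n → (Fin n → ℝ) × (Fin n → ℝ)
  | .inl i => (Pi.single i 1, 0)
  | .inr i => (0, Pi.single i 1)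

/-- Partial derivative on `N ⊆ ℝ^{2n}` in the `I`-th coordinate direction. -/
def pdN {n : ℕ} (I : Fin n ⊕ Fin n) (f : (Fin n → ℝ) × (Fin n → ℝ) → ℝ)
    (p : (Fin n → ℝ) × (Fin n → ℝ)) : ℝ :=
  fderiv ℝ f p (eN I)

/-- Entrywise partial derivative of a matrix-valued map on `N ⊆ ℝ^{2n}`. -/
def mpdN {n : ℕ} (I : Fin n ⊕ Fin n)
    (F : (Fin n → ℝ) × (Fin n → ℝ) → Matrix (Fin n ⊕ Fin n) (Fin n ⊕ Fin n) ℝ)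
    (p : (Fin n → ℝ) × (Fin n → ℝ)) : Matrix (Fin n ⊕ Fin n) (Fin n ⊕ Fin n) ℝ :=
  Matrix.of fun A B => pdN I (fun q => F q A B) p

/-- The metric `G(x,u) = blockdiag(g(x), g(x))` on `N = U × ℝⁿ`. -/
def GN {n : ℕ} (g : (Fin n → ℝ) → Matrix (Fin n) (Fin n) ℝ)
    (p : (Fin n → ℝ) × (Fin n → ℝ)) : Matrix (Fin n ⊕ Fin n) (Fin n ⊕ Fin n) ℝ :=
  Matrix.fromBlocks (g p.1) 0 0 (g p.1)

/-- Curvature `R_{IJ} = ∂_I Γ_J − ∂_J Γ_I + Γ_I Γ_J − Γ_J Γ_I` of a connection on `N`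
given by Christoffel symbols `Γ`. -/
def Riem {n : ℕ}
    (Γ : Fin n ⊕ Fin n → (Fin n → ℝ) × (Fin n → ℝ) → Matrix (Fin n ⊕ Fin n) (Fin n ⊕ Fin n) ℝ)
    (I J : Fin n ⊕ Fin n) (p : (Fin n → ℝ) × (Fin n → ℝ)) :
    Matrix (Fin n ⊕ Fin n) (Fin n ⊕ Fin n) ℝ :=
  mpdN I (Γ J) p - mpdN J (Γ I) p + Γ I p * Γ J p - Γ J p * Γ I p

/-- Christoffel symbols of the special connection `∇^N` on `N`:
`Γ^∇_i = blockdiag(0, 2Ŝᵢ)`, `Γ^∇_{i'} = [[0,0],[2Ŝᵢ,0]]`. -/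
def GammaNb {n : ℕ} (g : (Fin n → ℝ) → Matrix (Fin n) (Fin n) ℝ) :
    Fin n ⊕ Fin n → (Fin n → ℝ) × (Fin n → ℝ) → Matrix (Fin n ⊕ Fin n) (Fin n ⊕ Fin n) ℝ
  | .inl i => fun p => Matrix.fromBlocks 0 0 0 ((2 : ℝ) • Shat g i p.1)
  | .inr i => fun p => Matrix.fromBlocks 0 0 ((2 : ℝ) • Shat g i p.1) 0

/-- `P_{ij}(x) = g(x)⁻¹ ∂ᵢ∂ⱼ g(x)`, the coordinate expression of `g⁻¹ ∘ ∇S`. -/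
def Pmat {n : ℕ} (g : (Fin n → ℝ) → Matrix (Fin n) (Fin n) ℝ)
    (i j : Fin n) (x : Fin n → ℝ) : Matrix (Fin n) (Fin n) ℝ :=
  (g x)⁻¹ * Matrix.of fun a b => pd i (fun y => pd j (fun z => g z a b) y) x

/-- The Ricci curvature `ric(ξ,η) = Σ_K ⟨e^K, R_{K,ξ} η⟩` of a connection on `N`
with Christoffel symbols `Γ`. -/
def ricci {n : ℕ}
    (Γ : Fin n ⊕ Fin n → (Fin n → ℝ) × (Fin n → ℝ) → Matrix (Fin n ⊕ Fin n) (Fin n ⊕ Fin n) ℝ)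
    (p : (Fin n → ℝ) × (Fin n → ℝ)) (ξ η : Fin n ⊕ Fin n → ℝ) : ℝ :=
  ∑ K : Fin n ⊕ Fin n, ∑ I : Fin n ⊕ Fin n, ξ I * (Riem Γ K I p *ᵥ η) K

/-! ### Auxiliary lemmas -/

section auxgeneral
variable {n : ℕ}

lemma pd_congr {f f' : (Fin n → ℝ) → ℝ} {x : Fin n → ℝ} (h : f =ᶠ[nhds x] f') (i : Fin n) :
    pd i f x = pd i f' x := by unfold pd; rw [h.fderiv_eq]

lemma pd_const (c : ℝ) (i : Fin n) (x : Fin n → ℝ) : pd i (fun _ => c) x = 0 := by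
  simp [pd]

lemma pd_sum {ι : Type*} {s : Finset ι} {F : ι → (Fin n → ℝ) → ℝ} {x : Fin n → ℝ}
    (h : ∀ c ∈ s, DifferentiableAt ℝ (F c) x) (i : Fin n) :
    pd i (fun y => ∑ c ∈ s, F c y) x = ∑ c ∈ s, pd i (F c) x := by
  unfold pd; rw [fderiv_fun_sum h]; simp

lemma pd_mul {f h : (Fin n → ℝ) → ℝ} {x : Fin n → ℝ}
    (hf : DifferentiableAt ℝ f x) (hh : DifferentiableAt ℝ h x) (i : Fin n) :
    pd i (fun y => f y * h y) x = pd i f x * h x + f x * pd i h x := by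
  unfold pd; rw [fderiv_fun_mul hf hh]; simp; ring

/-- entrywise differentiability of a matrix-valued map -/
def EDiff {n : ℕ} (F : (Fin n → ℝ) → Matrix (Fin n) (Fin n) ℝ) (x : Fin n → ℝ) : Prop :=
  ∀ a b, DifferentiableAt ℝ (fun y => F y a b) x

lemma EDiff.mul {F G : (Fin n → ℝ) → Matrix (Fin n) (Fin n) ℝ} {x : Fin n → ℝ}
    (hF : EDiff F x) (hG : EDiff G x) : EDiff (fun y => F y * G y) x := by
  intro a b
  simp only [Matrix.mul_apply]
  exact DifferentiableAt.fun_sum fun c _ => (hF a c).fun_mul (hG c b)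

lemma mpd_mul {F G : (Fin n → ℝ) → Matrix (Fin n) (Fin n) ℝ} {x : Fin n → ℝ}
    (hF : EDiff F x) (hG : EDiff G x) (i : Fin n) :
    mpd i (fun y => F y * G y) x = mpd i F x * G x + F x * mpd i G x := by
  ext a b
  have h1 : (fun y => (F y * G y) a b) = fun y => ∑ c, F y a c * G y c b := by
    funext y; simp [Matrix.mul_apply]
  simp only [mpd, Matrix.of_apply, Matrix.add_apply, Matrix.mul_apply, h1]
  rw [pd_sum (fun c _ => (hF a c).fun_mul (hG c b)) i, ← Finset.sum_add_distrib]
  exact Finset.sum_congr rfl fun c _ => pd_mul (hF a c) (hG c b) i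

lemma diffAt_det {M : (Fin n → ℝ) → Matrix (Fin n) (Fin n) ℝ} {x : Fin n → ℝ}
    (hM : EDiff M x) : DifferentiableAt ℝ (fun y => (M y).det) x := by
  simp only [Matrix.det_apply']
  apply DifferentiableAt.fun_sum
  intro σ _
  exact ((HasFDerivAt.finset_prod
    (fun c _ => (hM (σ c) c).hasFDerivAt)).differentiableAt).const_mul _

lemma EDiff.adjugate {M : (Fin n → ℝ) → Matrix (Fin n) (Fin n) ℝ} {x : Fin n → ℝ}
    (hM : EDiff M x) : EDiff (fun y => (M y).adjugate) x := by
  intro a b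
  simp only [Matrix.adjugate_apply]
  apply diffAt_det
  intro c d
  simp only [Matrix.updateRow_apply]
  split_ifs
  · exact differentiableAt_const _
  · exact hM c d

lemma EDiff.inv {M : (Fin n → ℝ) → Matrix (Fin n) (Fin n) ℝ} {x : Fin n → ℝ}
    (hM : EDiff M x) (hdet : (M x).det ≠ 0) : EDiff (fun y => (M y)⁻¹) x := by
  intro a b
  have h1 : (fun y => (M y)⁻¹ a b) = fun y => ((M y).det)⁻¹ * (M y).adjugate a b := by
    funext y; simp [Matrix.inv_def, Ring.inverse_eq_inv]
  rw [h1]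
  exact ((diffAt_det hM).inv hdet).mul (hM.adjugate a b)

lemma pdN_const (c : ℝ) (I : Fin n ⊕ Fin n) (p) : pdN I (fun _ => c) p = 0 := by
  simp [pdN]

lemma pdN_fst {f : (Fin n → ℝ) → ℝ} {p : (Fin n → ℝ) × (Fin n → ℝ)}
    (hf : DifferentiableAt ℝ f p.1) (I : Fin n ⊕ Fin n) :
    pdN I (fun q => f q.1) p = Sum.elim (fun i => pd i f p.1) (fun _ => 0) I := by
  have h : fderiv ℝ (fun q : (Fin n → ℝ) × (Fin n → ℝ) => f q.1) p
      = (fderiv ℝ f p.1).comp (ContinuousLinearMap.fst ℝ (Fin n → ℝ) (Fin n → ℝ)) :=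
    (hf.hasFDerivAt.comp p hasFDerivAt_fst).fderiv
  cases I with
  | inl i => simp [pdN, h, eN, pd]
  | inr i => simp [pdN, h, eN]

lemma contDiffOn_pd {U : Set (Fin n → ℝ)} (hU : IsOpen U) {f : (Fin n → ℝ) → ℝ}
    (hf : ContDiffOn ℝ (⊤ : ℕ∞) f U) (i : Fin n) : ContDiffOn ℝ (⊤ : ℕ∞) (pd i f) U := by
  have h := hf.fderiv_of_isOpen hU (m := (⊤ : ℕ∞)) (by simp)
  exact ((ContinuousLinearMap.apply ℝ ℝ (Pi.single i 1)).contDiff).comp_contDiffOn h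

lemma pd_pd_comm {f : (Fin n → ℝ) → ℝ} {x : Fin n → ℝ}
    (hf : ContDiffAt ℝ 2 f x) (i j : Fin n) :
    pd i (pd j f) x = pd j (pd i f) x := by
  have hd : DifferentiableAt ℝ (fderiv ℝ f) x :=
    (hf.fderiv_right (m := 1) (by norm_num)).differentiableAt one_ne_zero
  have hsymm := hf.isSymmSndFDerivAt (by simp)
  have e : ∀ v : Fin n → ℝ, fderiv ℝ (fun y => fderiv ℝ f y v) x
      = (fderiv ℝ (fderiv ℝ f) x).flip v := by
    intro v
    rw [fderiv_clm_apply hd (differentiableAt_const v)]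
    simp
  show fderiv ℝ (fun y => fderiv ℝ f y (Pi.single j 1)) x (Pi.single i 1)
      = fderiv ℝ (fun y => fderiv ℝ f y (Pi.single i 1)) x (Pi.single j 1)
  rw [e, e]
  exact hsymm _ _

end auxgeneral

section auxmain
variable {n : ℕ} {U : Set (Fin n → ℝ)} {g : (Fin n → ℝ) → Matrix (Fin n) (Fin n) ℝ}

/-- `Aᵢ(x) = g(x)⁻¹ ∂ᵢ g(x) = 2 Ŝᵢ(x)`. -/
def Amat (g : (Fin n → ℝ) → Matrix (Fin n) (Fin n) ℝ) (i : Fin n) (y : Fin n → ℝ) :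
    Matrix (Fin n) (Fin n) ℝ :=
  (g y)⁻¹ * mpd i g y

lemma two_smul_Shat (i : Fin n) (y : Fin n → ℝ) : (2 : ℝ) • Shat g i y = Amat g i y := by
  rw [Shat, Amat, smul_smul]; norm_num

lemma GammaNb_inl (i : Fin n) :
    GammaNb g (.inl i) = fun p => Matrix.fromBlocks 0 0 0 (Amat g i p.1) := by
  funext p; simp [GammaNb, two_smul_Shat]

lemma GammaNb_inr (i : Fin n) :
    GammaNb g (.inr i) = fun p => Matrix.fromBlocks 0 0 (Amat g i p.1) 0 := by
  funext p; simp [GammaNb, two_smul_Shat]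

variable (hg : HessianData n U g) {x : Fin n → ℝ}
include hg

lemma hgE (hx : x ∈ U) : EDiff g x := fun a b =>
  ((hg.smooth a b).contDiffAt (hg.isOpen.mem_nhds hx)).differentiableAt (by simp)

lemma hmpdE (hx : x ∈ U) (j : Fin n) : EDiff (mpd j g) x := fun a b =>
  ((contDiffOn_pd hg.isOpen (hg.smooth a b) j).contDiffAt
    (hg.isOpen.mem_nhds hx)).differentiableAt (by simp)

lemma hdetne (hx : x ∈ U) : (g x).det ≠ 0 := (hg.invertible x hx).ne_zero

lemma hinvE (hx : x ∈ U) : EDiff (fun y => (g y)⁻¹) x :=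
  (hgE hg hx).inv (hdetne hg hx)

lemma hAE (hx : x ∈ U) (j : Fin n) : EDiff (Amat g j) x :=
  (hinvE hg hx).mul (hmpdE hg hx j)

lemma mpd_ginv (hx : x ∈ U) (i : Fin n) :
    mpd i (fun y => (g y)⁻¹) x = -((g x)⁻¹ * mpd i g x * (g x)⁻¹) := by
  have h2 : mpd i (fun y => g y * (g y)⁻¹) x = 0 := by
    ext a b
    have hev : (fun y => (g y * (g y)⁻¹) a b)
        =ᶠ[nhds x] (fun _ => (1 : Matrix (Fin n) (Fin n) ℝ) a b) := by
      filter_upwards [hg.isOpen.mem_nhds hx] with y hy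
      rw [Matrix.mul_nonsing_inv _ (hg.invertible y hy)]
    simp only [mpd, Matrix.of_apply, Matrix.zero_apply]
    rw [pd_congr hev, pd_const]
  rw [mpd_mul (hgE hg hx) (hinvE hg hx) i] at h2
  have h4 : (g x)⁻¹ * (mpd i g x * (g x)⁻¹ + g x * mpd i (fun y => (g y)⁻¹) x) = 0 := by
    rw [h2, mul_zero]
  rw [mul_add, ← mul_assoc, ← mul_assoc, Matrix.nonsing_inv_mul _ (hg.invertible x hx),
    one_mul] at h4
  exact eq_neg_of_add_eq_zero_right h4

lemma mpd_Amat (hx : x ∈ U) (i j : Fin n) :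
    mpd i (Amat g j) x
      = -(Amat g i x * Amat g j x) + (g x)⁻¹ * mpd i (mpd j g) x := by
  have h := mpd_mul (F := fun y => (g y)⁻¹) (G := mpd j g) (hinvE hg hx) (hmpdE hg hx j) i
  have h2 : mpd i (Amat g j) x
      = mpd i (fun y => (g y)⁻¹) x * mpd j g x + (g x)⁻¹ * mpd i (mpd j g) x := h
  rw [h2, mpd_ginv hg hx i, Amat, Amat]
  simp only [neg_mul, Matrix.mul_assoc]

lemma mpd_mpd_comm (hx : x ∈ U) (i j : Fin n) :
    mpd i (mpd j g) x = mpd j (mpd i g) x := by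
  ext a b
  exact pd_pd_comm
    (((hg.smooth a b).contDiffAt (hg.isOpen.mem_nhds hx)).of_le (by exact WithTop.coe_le_coe.mpr (le_top : (2 : ℕ∞) ≤ ⊤))) i j

end auxmain

section auxriem
variable {n : ℕ}

lemma mpdN_br {F : (Fin n → ℝ) → Matrix (Fin n) (Fin n) ℝ}
    {p : (Fin n → ℝ) × (Fin n → ℝ)} (hF : EDiff F p.1) (I : Fin n ⊕ Fin n) :
    mpdN I (fun q => Matrix.fromBlocks 0 0 0 (F q.1)) p
      = Sum.elim (fun i => Matrix.fromBlocks 0 0 0 (mpd i F p.1)) (fun _ => 0) I := by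
  ext A B
  cases A with
  | inl a =>
    cases B <;> cases I <;>
      simp [mpdN, pdN_const]
  | inr a =>
    cases B with
    | inl b => cases I <;> simp [mpdN, pdN_const]
    | inr b =>
      cases I <;>
        simp [mpdN, pdN_fst (hF a b), mpd]

lemma mpdN_bl {F : (Fin n → ℝ) → Matrix (Fin n) (Fin n) ℝ}
    {p : (Fin n → ℝ) × (Fin n → ℝ)} (hF : EDiff F p.1) (I : Fin n ⊕ Fin n) :
    mpdN I (fun q => Matrix.fromBlocks 0 0 (F q.1) 0) p
      = Sum.elim (fun i => Matrix.fromBlocks 0 0 (mpd i F p.1) 0) (fun _ => 0) I := by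
  ext A B
  cases A with
  | inl a =>
    cases B <;> cases I <;>
      simp [mpdN, pdN_const]
  | inr a =>
    cases B with
    | inl b =>
      cases I <;>
        simp [mpdN, pdN_fst (hF a b), mpd]
    | inr b => cases I <;> simp [mpdN, pdN_const]

lemma blocks_comb (W X Y Z : Matrix (Fin n) (Fin n) ℝ) :
    Matrix.fromBlocks 0 0 0 W - Matrix.fromBlocks 0 0 0 X
      + Matrix.fromBlocks 0 0 0 Y - Matrix.fromBlocks 0 0 0 Z
      = Matrix.fromBlocks (0 : Matrix (Fin n) (Fin n) ℝ) 0 0 (W - X + Y - Z) := by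
  ext A B; cases A <;> cases B <;> simp

lemma riem_anti
    (Γ : Fin n ⊕ Fin n → (Fin n → ℝ) × (Fin n → ℝ) → Matrix (Fin n ⊕ Fin n) (Fin n ⊕ Fin n) ℝ)
    (I J : Fin n ⊕ Fin n) (p) : Riem Γ I J p = -Riem Γ J I p := by
  unfold Riem; abel

variable {U : Set (Fin n → ℝ)} {g : (Fin n → ℝ) → Matrix (Fin n) (Fin n) ℝ}
  (hg : HessianData n U g) {p : (Fin n → ℝ) × (Fin n → ℝ)}
include hg

lemma riem_hh (hx : p.1 ∈ U) (i j : Fin n) :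
    Riem (GammaNb g) (.inl i) (.inl j) p = 0 := by
  unfold Riem
  rw [GammaNb_inl i, GammaNb_inl j,
    mpdN_br (hAE hg hx j) (.inl i), mpdN_br (hAE hg hx i) (.inl j)]
  simp only [Sum.elim_inl, Matrix.fromBlocks_multiply, Matrix.mul_zero, Matrix.zero_mul,
    add_zero, zero_add]
  rw [blocks_comb]
  rw [mpd_Amat hg hx i j, mpd_Amat hg hx j i, mpd_mpd_comm hg hx i j]
  have : -(Amat g i p.1 * Amat g j p.1) + (g p.1)⁻¹ * mpd j (mpd i g) p.1
      - (-(Amat g j p.1 * Amat g i p.1) + (g p.1)⁻¹ * mpd j (mpd i g) p.1)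
      + Amat g i p.1 * Amat g j p.1 - Amat g j p.1 * Amat g i p.1 = 0 := by abel
  rw [this]
  simp

lemma riem_vv (hx : p.1 ∈ U) (i j : Fin n) :
    Riem (GammaNb g) (.inr i) (.inr j) p = 0 := by
  unfold Riem
  rw [GammaNb_inr i, GammaNb_inr j,
    mpdN_bl (hAE hg hx j) (.inr i), mpdN_bl (hAE hg hx i) (.inr j)]
  simp [Matrix.fromBlocks_multiply]

lemma riem_hv (hx : p.1 ∈ U) (i j : Fin n) :
    Riem (GammaNb g) (.inl i) (.inr j) p
      = Matrix.fromBlocks 0 0 (Pmat g i j p.1) 0 := by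
  unfold Riem
  rw [GammaNb_inl i, GammaNb_inr j,
    mpdN_bl (hAE hg hx j) (.inl i), mpdN_br (hAE hg hx i) (.inr j)]
  simp only [Sum.elim_inl, Sum.elim_inr, Matrix.fromBlocks_multiply, Matrix.mul_zero,
    Matrix.zero_mul, add_zero, zero_add, sub_zero]
  have hz : (Matrix.fromBlocks 0 0 (0 * Amat g i p.1 + 0) (Amat g j p.1 * 0 + 0) :
      Matrix (Fin n ⊕ Fin n) (Fin n ⊕ Fin n) ℝ) = 0 := by simp
  have key : mpd i (Amat g j) p.1 + Amat g i p.1 * Amat g j p.1 = Pmat g i j p.1 := by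
    rw [mpd_Amat hg hx i j]
    have : Pmat g i j p.1 = (g p.1)⁻¹ * mpd i (mpd j g) p.1 := rfl
    rw [this]; abel
  ext A B
  cases A <;> cases B <;>
    simp [Matrix.fromBlocks_multiply, ← key]

end auxriem

section auxric
variable {n : ℕ}

lemma sum_single_mul {α : Type*} [Fintype α] [DecidableEq α] (c : α → ℝ) (I0 : α) :
    ∑ I, (Pi.single I0 1 : α → ℝ) I * c I = c I0 := by
  rw [Finset.sum_eq_single I0]
  · simp
  · intro b _ hb; rw [Pi.single_eq_of_ne hb]; ring
  · intro h; exact absurd (Finset.mem_univ _) h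

variable {U : Set (Fin n → ℝ)} {g : (Fin n → ℝ) → Matrix (Fin n) (Fin n) ℝ}
  (hg : HessianData n U g) {p : (Fin n → ℝ) × (Fin n → ℝ)}
include hg

lemma riem_vh (hx : p.1 ∈ U) (i j : Fin n) :
    Riem (GammaNb g) (.inr j) (.inl i) p = -(Matrix.fromBlocks 0 0 (Pmat g i j p.1) 0) := by
  rw [riem_anti, riem_hv hg hx]

lemma riem_col (hx : p.1 ∈ U) (i : Fin n) (K I : Fin n ⊕ Fin n) :
    Riem (GammaNb g) K I p K (Sum.inr i) = 0 := by
  cases K with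
  | inl k =>
    cases I with
    | inl l => rw [riem_hh hg hx]; simp
    | inr l => rw [riem_hv hg hx]; simp
  | inr k =>
    cases I with
    | inl l => rw [riem_vh hg hx]; simp
    | inr l => rw [riem_vv hg hx]; simp

lemma riem_row (hx : p.1 ∈ U) (i : Fin n) (K : Fin n ⊕ Fin n) (B : Fin n ⊕ Fin n) :
    Riem (GammaNb g) K (Sum.inr i) p K B = 0 := by
  cases K with
  | inl k => rw [riem_hv hg hx]; cases B <;> simp
  | inr k => rw [riem_vv hg hx]; simp

lemma ric_key (hx : p.1 ∈ U) (i j : Fin n) :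
    ∑ k : Fin n, Pmat g i k p.1 k j = ∑ k : Fin n, Pmat g i j p.1 k k := by
  refine Finset.sum_congr rfl fun k _ => ?_
  simp only [Pmat, Matrix.mul_apply, Matrix.of_apply]
  refine Finset.sum_congr rfl fun c _ => ?_
  congr 1
  refine pd_congr ?_ i
  filter_upwards [hg.isOpen.mem_nhds hx] with y hy
  exact hg.cubic_symm y hy c j k

end auxric

/-- for Hessian metric data, the curvature of `∇^N` is
`R^∇_{ij} = 0`, `R^∇_{i'j'} = 0`, `R^∇_{ij'} = [[0,0],[P_{ij},0]]`, and the Ricci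
curvature of `∇^N` satisfies `ric^∇(eᵢ,eⱼ) = −tr P_{ij}` and vanishes on all pairs
involving a vertical vector. -/
theorem stmt_13 {n : ℕ} (hn : 1 ≤ n) (U : Set (Fin n → ℝ))
    (g : (Fin n → ℝ) → Matrix (Fin n) (Fin n) ℝ)
    (hg : HessianData n U g) :
    ∀ p ∈ U ×ˢ (Set.univ : Set (Fin n → ℝ)),
      (∀ i j : Fin n, Riem (GammaNb g) (.inl i) (.inl j) p = 0) ∧
      (∀ i j : Fin n, Riem (GammaNb g) (.inr i) (.inr j) p = 0) ∧
      (∀ i j : Fin n, Riem (GammaNb g) (.inl i) (.inr j) p =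
        Matrix.fromBlocks 0 0 (Pmat g i j p.1) 0) ∧
      (∀ i j : Fin n, ricci (GammaNb g) p (Pi.single (Sum.inl i) 1) (Pi.single (Sum.inl j) 1)
        = -Matrix.trace (Pmat g i j p.1)) ∧
      (∀ (i : Fin n) (ξ : Fin n ⊕ Fin n → ℝ),
        ricci (GammaNb g) p (Pi.single (Sum.inr i) 1) ξ = 0 ∧
        ricci (GammaNb g) p ξ (Pi.single (Sum.inr i) 1) = 0) := by
  intro p hp
  have hx : p.1 ∈ U := hp.1
  refine ⟨fun i j => riem_hh hg hx i j, fun i j => riem_vv hg hx i j,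
    fun i j => riem_hv hg hx i j, ?_, ?_⟩
  · intro i j
    unfold ricci
    simp only [sum_single_mul, Matrix.mulVec_single_one, Matrix.col_apply, mul_one]
    rw [Fintype.sum_sum_type]
    have h1 : ∀ k : Fin n,
        Riem (GammaNb g) (Sum.inl k) (Sum.inl i) p (Sum.inl k) (Sum.inl j) = 0 := by
      intro k; rw [riem_hh hg hx]; simp
    have h2 : ∀ k : Fin n,
        Riem (GammaNb g) (Sum.inr k) (Sum.inl i) p (Sum.inr k) (Sum.inl j)
          = -(Pmat g i k p.1 k j) := by
      intro k; rw [riem_vh hg hx]; simp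
    simp only [h1, h2, Finset.sum_const_zero, zero_add]
    rw [Finset.sum_neg_distrib, ric_key hg hx i j]
    simp [Matrix.trace, Matrix.diag]
  · intro i ξ
    constructor
    · unfold ricci
      simp only [sum_single_mul]
      refine Finset.sum_eq_zero fun K _ => ?_
      simp [Matrix.mulVec, dotProduct, riem_row hg hx i K]
    · unfold ricci
      simp only [Matrix.mulVec_single_one, Matrix.col_apply, mul_one]
      refine Finset.sum_eq_zero fun K _ => Finset.sum_eq_zero fun I _ => ?_
      rw [riem_col hg hx i K I, mul_zero]
end
end

section
/- Assume the data is special real. Define Ŝ^N_i := blockdiag(Ŝ_i, −Ŝ_i) and Ŝ^N_{i'} := [[0, −Ŝ_i],[−Ŝ_i, 0]] for i = 1,…,n. Then the Levi-Civita curvature of G (with Christoffel symbols Γ_i := blockdiag(Ŝ_i, Ŝ_i), Γ_{i'} := [[0, −Ŝ_i],[Ŝ_i, 0]]) satisfies R_{IJ} = −(Ŝ^N_I Ŝ^N_J − Ŝ^N_J Ŝ^N_I) for all I, J ∈ {1,…,2n}. -/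
open Matrix

noncomputable section

/-- Special real data on `U ⊆ ℝⁿ`: a symmetric invertible matrix-valued map of the
affine form `g_{ij}(x) = b_{ij} + Σ_k a_{ijk} x^k` with `b` symmetric and `a`
totally symmetric. -/
structure SpecialRealData (n : ℕ) (U : Set (Fin n → ℝ))
    (g : (Fin n → ℝ) → Matrix (Fin n) (Fin n) ℝ) : Prop where
  isOpen : IsOpen U
  smooth : ∀ i j, ContDiffOn ℝ (⊤ : ℕ∞) (fun x => g x i j) U
  symm : ∀ x ∈ U, (g x).IsSymm
  invertible : ∀ x ∈ U, IsUnit (g x).det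
  affine : ∃ (b : Matrix (Fin n) (Fin n) ℝ) (a : Fin n → Fin n → Fin n → ℝ),
    b.IsSymm ∧ (∀ i j k, a i j k = a j i k) ∧ (∀ i j k, a i j k = a i k j) ∧
    ∀ (x : Fin n → ℝ) (i j : Fin n), g x i j = b i j + ∑ k, a i j k * x k

/-- Christoffel symbols of the Levi-Civita connection of `G` on `N`:
`Γ_i = blockdiag(Ŝᵢ, Ŝᵢ)`, `Γ_{i'} = [[0, −Ŝᵢ],[Ŝᵢ, 0]]`. -/
def GammaLC {n : ℕ} (g : (Fin n → ℝ) → Matrix (Fin n) (Fin n) ℝ) :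
    Fin n ⊕ Fin n → (Fin n → ℝ) × (Fin n → ℝ) → Matrix (Fin n ⊕ Fin n) (Fin n ⊕ Fin n) ℝ
  | .inl i => fun p => Matrix.fromBlocks (Shat g i p.1) 0 0 (Shat g i p.1)
  | .inr i => fun p => Matrix.fromBlocks 0 (-(Shat g i p.1)) (Shat g i p.1) 0

/-- The tensor `Ŝ^N`: `Ŝ^N_i = blockdiag(Ŝᵢ, −Ŝᵢ)`, `Ŝ^N_{i'} = [[0,−Ŝᵢ],[−Ŝᵢ,0]]`. -/
def ShatN {n : ℕ} (g : (Fin n → ℝ) → Matrix (Fin n) (Fin n) ℝ) :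
    Fin n ⊕ Fin n → (Fin n → ℝ) × (Fin n → ℝ) → Matrix (Fin n ⊕ Fin n) (Fin n ⊕ Fin n) ℝ
  | .inl i => fun p => Matrix.fromBlocks (Shat g i p.1) 0 0 (-(Shat g i p.1))
  | .inr i => fun p => Matrix.fromBlocks 0 (-(Shat g i p.1)) (-(Shat g i p.1)) 0

section Stmt15Aux

attribute [local instance] Matrix.linftyOpNormedRing Matrix.linftyOpNormedAlgebra

variable {n : ℕ}

private theorem pd_helper {f : (Fin n → ℝ) → ℝ} {L : (Fin n → ℝ) →L[ℝ] ℝ} {x : Fin n → ℝ}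
    (h : HasFDerivAt f L x) (i : Fin n) : pd i f x = L (Pi.single i 1) := by
  rw [pd, h.fderiv]

private theorem pdN_inl_helper {f : (Fin n → ℝ) → ℝ} {L : (Fin n → ℝ) →L[ℝ] ℝ} {x : Fin n → ℝ}
    (h : HasFDerivAt f L x) (i : Fin n) (u : Fin n → ℝ) :
    pdN (.inl i) (fun q => f q.1) (x, u) = L (Pi.single i 1) := by
  have h2 : HasFDerivAt (fun q : (Fin n → ℝ) × (Fin n → ℝ) => f q.1)
      (L.comp (ContinuousLinearMap.fst ℝ (Fin n → ℝ) (Fin n → ℝ))) (x, u) :=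
    h.comp (x, u) (hasFDerivAt_fst)
  rw [pdN, h2.fderiv]
  simp [eN]

private theorem pdN_inr_helper {f : (Fin n → ℝ) → ℝ} {L : (Fin n → ℝ) →L[ℝ] ℝ} {x : Fin n → ℝ}
    (h : HasFDerivAt f L x) (i : Fin n) (u : Fin n → ℝ) :
    pdN (.inr i) (fun q => f q.1) (x, u) = 0 := by
  have h2 : HasFDerivAt (fun q : (Fin n → ℝ) × (Fin n → ℝ) => f q.1)
      (L.comp (ContinuousLinearMap.fst ℝ (Fin n → ℝ) (Fin n → ℝ))) (x, u) :=
    h.comp (x, u) (hasFDerivAt_fst)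
  rw [pdN, h2.fderiv]
  simp [eN]

/-- Entry evaluation of a matrix, as a continuous linear map. -/
private def entryCLM (a b : Fin n) : Matrix (Fin n) (Fin n) ℝ →L[ℝ] ℝ :=
  LinearMap.toContinuousLinearMap
    { toFun := fun M => M a b
      map_add' := fun M N => rfl
      map_smul' := fun c M => rfl }

@[simp] private theorem entryCLM_apply (a b : Fin n) (M : Matrix (Fin n) (Fin n) ℝ) :
    entryCLM a b M = M a b := rfl

/-- The linear part of an affine matrix-valued map. -/
private def lmap (A : Fin n → Matrix (Fin n) (Fin n) ℝ) :
    (Fin n → ℝ) →L[ℝ] Matrix (Fin n) (Fin n) ℝ :=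
  LinearMap.toContinuousLinearMap
    { toFun := fun v => ∑ k, v k • A k
      map_add' := by intro v w; simp [add_smul, Finset.sum_add_distrib]
      map_smul' := by intro c v; simp [smul_smul, Finset.smul_sum] }

private theorem lmap_apply (A : Fin n → Matrix (Fin n) (Fin n) ℝ) (v : Fin n → ℝ) :
    lmap A v = ∑ k, v k • A k := rfl

private theorem lmap_single (A : Fin n → Matrix (Fin n) (Fin n) ℝ) (i : Fin n) :
    lmap A (Pi.single i 1) = A i := by
  rw [lmap_apply]
  rw [Finset.sum_eq_single i]
  · simp
  · intro k _ hk; simp [Pi.single_apply, hk]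
  · simp

/-- Main analytic lemma: the entries of `Shat g j` are differentiable on `U`
with partial derivatives `∂ᵢ Ŝⱼ = -2 Ŝᵢ Ŝⱼ`. -/
private theorem shat_hasFDeriv {U : Set (Fin n → ℝ)}
    {g : (Fin n → ℝ) → Matrix (Fin n) (Fin n) ℝ}
    (hg : SpecialRealData n U g) {x : Fin n → ℝ} (hx : x ∈ U) (j a' b' : Fin n) :
    ∃ L : (Fin n → ℝ) →L[ℝ] ℝ, HasFDerivAt (fun y => Shat g j y a' b') L x ∧
      ∀ i, L (Pi.single i 1) =
        (-(Shat g i x * Shat g j x) - Shat g i x * Shat g j x) a' b' := by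
  classical
  obtain ⟨b, a, hb, ha1, ha2, haff⟩ := hg.affine
  set A : Fin n → Matrix (Fin n) (Fin n) ℝ := fun k => Matrix.of fun i j => a i j k with hA
  -- g is affine
  have hgfun : g = fun y => b + lmap A y := by
    funext y
    ext i j
    simp [haff, Matrix.add_apply, Matrix.sum_apply, Matrix.smul_apply, lmap_apply, hA, mul_comm]
  have hgfd : ∀ y, HasFDerivAt g (lmap A) y := by
    intro y
    rw [hgfun]
    exact (lmap A).hasFDerivAt.const_add b
  -- mpd of g is A
  have hmpd : ∀ y i, mpd i g y = A i := by
    intro y i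
    ext c d
    have h1 : HasFDerivAt (fun z => g z c d) ((entryCLM c d).comp (lmap A)) y :=
      (entryCLM c d).hasFDerivAt.comp y (hgfd y)
    rw [mpd, Matrix.of_apply, pd_helper h1 i]
    simp [lmap_single]
  -- Shat as a matrix-valued function
  have hShat : ∀ k, (fun y => Shat g k y) = fun y => (2⁻¹ : ℝ) • ((g y)⁻¹ * A k) := by
    intro k
    funext y
    rw [Shat, hmpd]
  -- derivative of the inverse
  have hu : IsUnit (g x) := (Matrix.isUnit_iff_isUnit_det _).mpr (hg.invertible x hx)
  have huc : (↑hu.unit⁻¹ : Matrix (Fin n) (Fin n) ℝ) = (g x)⁻¹ := by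
    rw [Matrix.coe_units_inv, IsUnit.unit_spec]
  set Dinv : (Fin n → ℝ) →L[ℝ] Matrix (Fin n) (Fin n) ℝ :=
    (-(ContinuousLinearMap.mulLeftRight ℝ (Matrix (Fin n) (Fin n) ℝ)
      ((g x)⁻¹) ((g x)⁻¹))).comp (lmap A) with hDinv
  have hinv : HasFDerivAt (fun y => (g y)⁻¹) Dinv x := by
    have h1 := (hasFDerivAt_ringInverse (𝕜 := ℝ) hu.unit)
    rw [huc, hu.unit_spec] at h1
    have h2 := h1.comp x (hgfd x)
    have h0 : (fun y => (g y)⁻¹) = (Ring.inverse ∘ g) := by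
      funext y
      simp [Matrix.nonsing_inv_eq_ringInverse]
    rw [h0]
    exact h2
  -- derivative of Shat entries
  have h3 : HasFDerivAt (fun y => (g y)⁻¹ * A j)
      (((ContinuousLinearMap.mul ℝ (Matrix (Fin n) (Fin n) ℝ)).flip (A j)).comp Dinv) x :=
    ((ContinuousLinearMap.mul ℝ (Matrix (Fin n) (Fin n) ℝ)).flip (A j)).hasFDerivAt.comp x hinv
  have h4 := h3.const_smul (2⁻¹ : ℝ)
  have h5 := (entryCLM a' b').hasFDerivAt.comp x h4
  refine ⟨(entryCLM a' b').comp ((2⁻¹ : ℝ) •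
      (((ContinuousLinearMap.mul ℝ (Matrix (Fin n) (Fin n) ℝ)).flip (A j)).comp Dinv)), ?_, ?_⟩
  · have hfun : (fun y => Shat g j y a' b')
        = ⇑(entryCLM a' b') ∘ (fun y => (2⁻¹ : ℝ) • ((g y)⁻¹ * A j)) := by
      funext y
      simp only [Function.comp_apply, entryCLM_apply]
      exact congrFun (congrFun (congrFun (hShat j) y) a') b'
    rw [hfun]
    exact h5
  · intro i
    have hmat : (2⁻¹ : ℝ) • (-((g x)⁻¹ * A i * (g x)⁻¹) * A j)
        = -(Shat g i x * Shat g j x) - Shat g i x * Shat g j x := by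
      rw [Shat, Shat, hmpd, hmpd]
      have e1 : ((2⁻¹:ℝ) • ((g x)⁻¹ * A i)) * ((2⁻¹:ℝ) • ((g x)⁻¹ * A j))
          = (4⁻¹:ℝ) • ((g x)⁻¹ * A i * ((g x)⁻¹ * A j)) := by
        rw [Matrix.smul_mul, Matrix.mul_smul, smul_smul]; norm_num
      have e2 : (-((g x)⁻¹ * A i * (g x)⁻¹)) * A j
          = -((g x)⁻¹ * A i * ((g x)⁻¹ * A j)) := by
        rw [Matrix.neg_mul, Matrix.mul_assoc]
      rw [e1, e2, smul_neg, sub_eq_add_neg, ← neg_add, ← add_smul]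
      norm_num
    conv_rhs => rw [← hmat]
    simp [hDinv, lmap_single, mul_comm, ContinuousLinearMap.comp_apply,
      ContinuousLinearMap.smul_apply, ContinuousLinearMap.neg_apply, ContinuousLinearMap.flip_apply,
      ContinuousLinearMap.mul_apply', ContinuousLinearMap.mulLeftRight_apply]
    change ((2⁻¹ : ℝ) • ((-((g x)⁻¹ * lmap A (Pi.single i 1) * (g x)⁻¹)) * A j)) a' b' = _
    rw [lmap_single]
    simp [Matrix.smul_apply, Matrix.neg_mul, Matrix.neg_apply, smul_eq_mul, mul_neg]

end Stmt15Aux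

/-- for special real data, the Levi-Civita curvature of `G` on `N` is
`R_{IJ} = −[Ŝ^N_I, Ŝ^N_J]` for all `I, J`. -/
theorem stmt_15 {n : ℕ} (hn : 1 ≤ n) (U : Set (Fin n → ℝ))
    (g : (Fin n → ℝ) → Matrix (Fin n) (Fin n) ℝ)
    (hg : SpecialRealData n U g) :
    ∀ p ∈ U ×ˢ (Set.univ : Set (Fin n → ℝ)), ∀ I J : Fin n ⊕ Fin n,
      Riem (GammaLC g) I J p =
        -(ShatN g I p * ShatN g J p - ShatN g J p * ShatN g I p) := by
  intro p hp I J
  obtain ⟨x, u⟩ := p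
  have hx : x ∈ U := hp.1
  have key := fun (j a' b' : Fin n) => shat_hasFDeriv hg hx j a' b'
  have hzero : ∀ (I : Fin n ⊕ Fin n) (c : ℝ) (q : (Fin n → ℝ) × (Fin n → ℝ)),
      pdN I (fun _ => c) q = 0 := by
    intro I c q
    rw [pdN, fderiv_fun_const]
    simp
  have hpdshat : ∀ (i j a' b' : Fin n),
      pdN (.inl i) (fun q => Shat g j q.1 a' b') (x, u)
        = (-(Shat g i x * Shat g j x) - Shat g i x * Shat g j x) a' b' := by
    intro i j a' b'
    obtain ⟨L, hL, hLv⟩ := key j a' b'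
    rw [pdN_inl_helper hL i u, hLv i]
  have hpdshat_neg : ∀ (i j a' b' : Fin n),
      pdN (.inl i) (fun q => -(Shat g j q.1 a' b')) (x, u)
        = -((-(Shat g i x * Shat g j x) - Shat g i x * Shat g j x) a' b') := by
    intro i j a' b'
    obtain ⟨L, hL, hLv⟩ := key j a' b'
    rw [pdN_inl_helper (f := fun y => -(Shat g j y a' b')) hL.neg i u]
    simp [hLv i]
  have hpdshat_v : ∀ (i j a' b' : Fin n),
      pdN (.inr i) (fun q => Shat g j q.1 a' b') (x, u) = 0 := by
    intro i j a' b'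
    obtain ⟨L, hL, hLv⟩ := key j a' b'
    exact pdN_inr_helper hL i u
  have hpdshat_vneg : ∀ (i j a' b' : Fin n),
      pdN (.inr i) (fun q => -(Shat g j q.1 a' b')) (x, u) = 0 := by
    intro i j a' b'
    obtain ⟨L, hL, hLv⟩ := key j a' b'
    exact pdN_inr_helper hL.neg i u
  have h1 : ∀ i j : Fin n, mpdN (.inl i) (GammaLC g (.inl j)) (x, u)
      = Matrix.fromBlocks (-(Shat g i x * Shat g j x) - Shat g i x * Shat g j x) 0 0
          (-(Shat g i x * Shat g j x) - Shat g i x * Shat g j x) := by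
    intro i j
    ext A B
    rcases A with a' | a' <;> rcases B with b' | b' <;>
      simp only [mpdN, Matrix.of_apply, GammaLC, Matrix.fromBlocks_apply₁₁,
        Matrix.fromBlocks_apply₁₂, Matrix.fromBlocks_apply₂₁, Matrix.fromBlocks_apply₂₂,
        Matrix.neg_apply, Matrix.zero_apply] <;>
      simp [hzero, hpdshat, hpdshat_neg]
  have h2 : ∀ i j : Fin n, mpdN (.inl i) (GammaLC g (.inr j)) (x, u)
      = Matrix.fromBlocks 0 (-(-(Shat g i x * Shat g j x) - Shat g i x * Shat g j x))
          (-(Shat g i x * Shat g j x) - Shat g i x * Shat g j x) 0 := by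
    intro i j
    ext A B
    rcases A with a' | a' <;> rcases B with b' | b' <;>
      simp only [mpdN, Matrix.of_apply, GammaLC, Matrix.fromBlocks_apply₁₁,
        Matrix.fromBlocks_apply₁₂, Matrix.fromBlocks_apply₂₁, Matrix.fromBlocks_apply₂₂,
        Matrix.neg_apply, Matrix.zero_apply] <;>
      simp [hzero, hpdshat, hpdshat_neg]
  have h3 : ∀ (i : Fin n) (J : Fin n ⊕ Fin n), mpdN (.inr i) (GammaLC g J) (x, u) = 0 := by
    intro i J
    ext A B
    rcases J with j | j <;> rcases A with a' | a' <;> rcases B with b' | b' <;>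
      simp only [mpdN, Matrix.of_apply, GammaLC, Matrix.fromBlocks_apply₁₁,
        Matrix.fromBlocks_apply₁₂, Matrix.fromBlocks_apply₂₁, Matrix.fromBlocks_apply₂₂,
        Matrix.neg_apply, Matrix.zero_apply] <;>
      simp [hzero, hpdshat_v, hpdshat_vneg]
  rcases I with i | i <;> rcases J with j | j
  · rw [Riem, h1 i j, h1 j i]
    simp only [GammaLC, ShatN, Matrix.fromBlocks_multiply, sub_eq_add_neg,
      Matrix.fromBlocks_neg, Matrix.fromBlocks_add, Matrix.fromBlocks_inj]
    refine ⟨?_, ?_, ?_, ?_⟩ <;> noncomm_ring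
  · rw [Riem, h2 i j, h3 j (.inl i), sub_zero]
    simp only [GammaLC, ShatN, Matrix.fromBlocks_multiply, sub_eq_add_neg,
      Matrix.fromBlocks_neg, Matrix.fromBlocks_add, Matrix.fromBlocks_inj]
    refine ⟨?_, ?_, ?_, ?_⟩ <;> noncomm_ring
  · rw [Riem, h3 i (.inl j), h2 j i, zero_sub]
    simp only [GammaLC, ShatN, Matrix.fromBlocks_multiply, sub_eq_add_neg,
      Matrix.fromBlocks_neg, Matrix.fromBlocks_add, Matrix.fromBlocks_inj]
    refine ⟨?_, ?_, ?_, ?_⟩ <;> noncomm_ring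
  · rw [Riem, h3 i (.inr j), h3 j (.inr i), sub_zero, zero_add]
    simp only [GammaLC, ShatN, Matrix.fromBlocks_multiply, sub_eq_add_neg,
      Matrix.fromBlocks_neg, Matrix.fromBlocks_add, Matrix.fromBlocks_inj]
    refine ⟨?_, ?_, ?_, ?_⟩ <;> noncomm_ring
end
end

section
/- Fix u₀ ∈ ℝⁿ and define σ : N → N by σ(x,u) := (x, 2u₀ − u), with constant differential A := blockdiag(Id, −Id). Then: (i) σ∘σ = id and the fixed-point set of σ is exactly U × {u₀}; (ii) σ is an isometry of G: Aᵀ G(σ(p)) A = G(p) for all p ∈ N; (iii) σ preserves the connection ∇^N: A⁻¹ Γ^∇_{Aξ}(σ(p)) A = Γ^∇_ξ(p) for all p ∈ N and ξ ∈ ℝ^{2n}, where Γ^∇_ξ := Σ_I ξ^I Γ^∇_I with Γ^∇_i := blockdiag(0, 2Ŝ_i), Γ^∇_{i'} := [[0,0],[2Ŝ_i,0]]; (iv) σ maps the horizontal distribution ℝⁿ × {0} and the vertical distribution {0} × ℝⁿ to themselves. -/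
open Matrix

noncomputable section

/-- for Hessian metric data, the reflection `σ(x,u) = (x, 2u₀ − u)`
(whose constant differential is `A = blockdiag(Id, −Id)`) is an involution whose
fixed point set in `N` is `U × {u₀}`, an isometry of `G`, preserves the connection
`∇^N`, and maps the horizontal and vertical distributions to themselves. -/
theorem stmt_18 {n : ℕ} (hn : 1 ≤ n) (U : Set (Fin n → ℝ))
    (g : (Fin n → ℝ) → Matrix (Fin n) (Fin n) ℝ)
    (hg : HessianData n U g) (u₀ : Fin n → ℝ)
    (σ : (Fin n → ℝ) × (Fin n → ℝ) → (Fin n → ℝ) × (Fin n → ℝ))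
    (hσ : ∀ p, σ p = (p.1, (2 : ℝ) • u₀ - p.2))
    (A : Matrix (Fin n ⊕ Fin n) (Fin n ⊕ Fin n) ℝ)
    (hA : A = Matrix.fromBlocks 1 0 0 (-1)) :
    -- σ has constant differential corresponding to A
    (∀ (p v : (Fin n → ℝ) × (Fin n → ℝ)), fderiv ℝ σ p v = (v.1, -v.2)) ∧
    -- (i) involution, with fixed point set U × {u₀} in N
    (∀ p, σ (σ p) = p) ∧
    (∀ p ∈ U ×ˢ (Set.univ : Set (Fin n → ℝ)), σ p = p ↔ p.2 = u₀) ∧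
    -- (ii) isometry of G
    (∀ p ∈ U ×ˢ (Set.univ : Set (Fin n → ℝ)), Aᵀ * GN g (σ p) * A = GN g p) ∧
    -- (iii) preserves the connection ∇^N
    (∀ p ∈ U ×ˢ (Set.univ : Set (Fin n → ℝ)), ∀ ξ : Fin n ⊕ Fin n → ℝ,
      A⁻¹ * (∑ I : Fin n ⊕ Fin n, (A *ᵥ ξ) I • GammaNb g I (σ p)) * A =
        ∑ I : Fin n ⊕ Fin n, ξ I • GammaNb g I p) ∧
    -- (iv) preserves the horizontal and vertical distributions
    (∀ ξ : Fin n ⊕ Fin n → ℝ,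
      ((∀ i, ξ (Sum.inr i) = 0) → ∀ i, (A *ᵥ ξ) (Sum.inr i) = 0) ∧
      ((∀ i, ξ (Sum.inl i) = 0) → ∀ i, (A *ᵥ ξ) (Sum.inl i) = 0)) := by
  have hA2 : A * A = 1 := by
    rw [hA]
    simp [Matrix.fromBlocks_multiply, ← Matrix.fromBlocks_one]
  have hAinv : A⁻¹ = A := Matrix.inv_eq_right_inv hA2
  have hAv : ∀ (ξ : Fin n ⊕ Fin n → ℝ) (I : Fin n ⊕ Fin n), (A *ᵥ ξ) I =
      Sum.elim (fun i => ξ (Sum.inl i)) (fun i => -ξ (Sum.inr i)) I := by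
    intro ξ I
    cases I <;>
      simp [hA, Matrix.mulVec, dotProduct, Fintype.sum_sum_type, Matrix.fromBlocks,
        Matrix.one_apply, ite_mul]
  set L : ((Fin n → ℝ) × (Fin n → ℝ)) →L[ℝ] ((Fin n → ℝ) × (Fin n → ℝ)) :=
    (ContinuousLinearMap.fst ℝ (Fin n → ℝ) (Fin n → ℝ)).prod
      (-(ContinuousLinearMap.snd ℝ (Fin n → ℝ) (Fin n → ℝ))) with hL
  have hσfun : σ = fun p => (((0 : Fin n → ℝ), (2 : ℝ) • u₀) : (Fin n → ℝ) × (Fin n → ℝ)) + L p := by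
    funext p
    rw [hσ p]
    simp [hL, Prod.ext_iff, sub_eq_add_neg]
  have hd : ∀ p, HasFDerivAt σ L p := by
    intro p
    rw [hσfun]
    exact L.hasFDerivAt.const_add _
  refine ⟨?_, ?_, ?_, ?_, ?_, ?_⟩
  · intro p v
    rw [(hd p).fderiv]
    simp [hL]
  · intro p
    rw [hσ (σ p), hσ p]
    simp
  · intro p hp
    rw [hσ p]
    constructor
    · intro h
      have h2 : (2 : ℝ) • u₀ - p.2 = p.2 := congrArg Prod.snd h
      have h3 : (2 : ℝ) • u₀ = (2 : ℝ) • p.2 := by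
        rw [sub_eq_iff_eq_add] at h2
        rw [h2, two_smul]
      exact (smul_right_injective (Fin n → ℝ) two_ne_zero h3).symm
    · intro h
      rw [h]
      exact Prod.ext rfl (by rw [two_smul, add_sub_cancel_right, h])
  · intro p hp
    rw [hσ p, hA]
    simp [GN, Matrix.fromBlocks_transpose, Matrix.fromBlocks_multiply]
  · intro p hp ξ
    rw [hAinv, Matrix.mul_sum, Matrix.sum_mul]
    refine Finset.sum_congr rfl fun I _ => ?_
    rw [hAv]
    cases I with
    | inl i =>
      simp only [Sum.elim_inl, GammaNb, hσ p, hA]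
      rw [Matrix.mul_smul, Matrix.smul_mul]
      congr 1
      simp [Matrix.fromBlocks_multiply]
    | inr i =>
      simp only [Sum.elim_inr, GammaNb, hσ p, hA]
      rw [Matrix.mul_smul, Matrix.smul_mul, neg_smul]
      rw [show ((Matrix.fromBlocks 1 0 0 (-1) : Matrix (Fin n ⊕ Fin n) (Fin n ⊕ Fin n) ℝ) *
        Matrix.fromBlocks 0 0 ((2 : ℝ) • Shat g i p.1) 0 * Matrix.fromBlocks 1 0 0 (-1)) =
        -(Matrix.fromBlocks 0 0 ((2 : ℝ) • Shat g i p.1) 0) by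
          simp [Matrix.fromBlocks_multiply, Matrix.fromBlocks_neg]]
      rw [smul_neg, neg_neg]
  · intro ξ
    refine ⟨fun h i => ?_, fun h i => ?_⟩
    · rw [hAv]; simp [h]
    · rw [hAv]; simp [h]
end
end
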